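/- arXiv:0907.1724 — 9 statements merged into one kernel-verified Lean document; each statement's English description precedes it below -/
import Mathlib

section
/- The k-stretch (series composition of k edges of weight α) implements a weight α' satisfying 1 + q/α' = (1 + q/α)^k. -/
set_option maxHeartbeats 1000000


open scoped Classical

noncomputable section

/-- The graph on vertex set `V` whose edges are the members of `A`,
with endpoints given by `ends`. -/
def subGraph {V E : Type*} (ends : E → V × V) (A : Finset E) : SimpleGraph V :=
  SimpleGraph.fromRel (fun u v => ∃ e ∈ A, ends e = (u, v) ∨ ends e = (v, u))

/-- Number of connected components of the graph `(V, A)`. -/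
def kappa {V E : Type*} (ends : E → V × V) (A : Finset E) : ℕ :=
  Nat.card (subGraph ends A).ConnectedComponent

/-- The contribution to the multivariate Tutte polynomial `Z(G;q,w)` from
edge-subsets `A` satisfying the predicate `P`. -/
def Zcond {V E : Type*} [Fintype E] (q : ℝ) (ends : E → V × V)
    (w : E → ℝ) (P : Finset E → Prop) : ℝ :=
  ∑ A : Finset E, if P A then (∏ e ∈ A, w e) * q ^ kappa ends A else 0

lemma reach_const {V β : Type*} {G : SimpleGraph V} (f : V → β)
    (h : ∀ a b, G.Adj a b → f a = f b) {u v : V} (hr : G.Reachable u v) : f u = f v := by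
  obtain ⟨p⟩ := hr
  induction p with
  | nil => rfl
  | cons hadj p ih => exact (h _ _ hadj).trans ih

def pends (k : ℕ) : Fin k → Fin (k+1) × Fin (k+1) := fun i => (i.castSucc, i.succ)

lemma adj_iff {k : ℕ} (A : Finset (Fin k)) (u v : Fin (k+1)) :
    (subGraph (pends k) A).Adj u v ↔
      ∃ i ∈ A, (u = i.castSucc ∧ v = i.succ) ∨ (u = i.succ ∧ v = i.castSucc) := by
  constructor
  · rintro ⟨hne, h | h⟩ <;> obtain ⟨i, hi, h | h⟩ := h <;>
      refine ⟨i, hi, ?_⟩ <;> simp [pends, Prod.ext_iff] at h <;> tauto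
  · rintro ⟨i, hi, h⟩
    have hne : i.castSucc ≠ i.succ := by
      intro he
      have := congrArg Fin.val he
      simp at this
    rcases h with ⟨hu, hv⟩ | ⟨hu, hv⟩ <;> subst hu <;> subst hv
    · exact ⟨hne, Or.inl ⟨i, hi, Or.inl rfl⟩⟩
    · exact ⟨hne.symm, Or.inl ⟨i, hi, Or.inr rfl⟩⟩

lemma reach_iff {k : ℕ} (A : Finset (Fin k)) (u v : Fin (k+1)) (huv : u ≤ v) :
    (subGraph (pends k) A).Reachable u v ↔
      ∀ i : Fin k, (u : ℕ) ≤ (i : ℕ) → (i : ℕ) < (v : ℕ) → i ∈ A := by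
  constructor
  · intro hr i hui hiv
    by_contra hiA
    have key := reach_const (G := subGraph (pends k) A)
      (fun x => decide ((x : ℕ) ≤ (i : ℕ))) ?_ hr
    · simp only [decide_eq_decide] at key
      have h1 : (u : ℕ) ≤ i := hui
      have h2 : ¬ (v : ℕ) ≤ i := by omega
      rw [key] at h1; exact h2 h1
    · intro a b hab
      rw [adj_iff] at hab
      obtain ⟨j, hj, h⟩ := hab
      have hji : j ≠ i := fun he => hiA (he ▸ hj)
      have hji' : (j : ℕ) ≠ (i : ℕ) := fun he => hji (Fin.ext he)
      rcases h with ⟨ha, hb⟩ | ⟨ha, hb⟩ <;> subst ha <;> subst hb <;>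
        simp [Fin.coe_castSucc, Fin.val_succ, decide_eq_decide] <;> omega
  · intro h
    -- induction on (v : ℕ) - (u : ℕ)
    obtain ⟨n, hn⟩ : ∃ n, (v : ℕ) - (u : ℕ) = n := ⟨_, rfl⟩
    induction n generalizing u with
    | zero =>
      have huv' : (u : ℕ) ≤ v := huv
      have : u = v := Fin.ext (by omega)
      exact this ▸ SimpleGraph.Reachable.refl u
    | succ n ih =>
      have huv' : (u : ℕ) ≤ v := huv
      have hvk : (v : ℕ) ≤ k := Nat.lt_succ_iff.mp v.isLt
      have huk : (u : ℕ) < k := by omega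
      set j : Fin k := ⟨u, huk⟩ with hj
      have hjA : j ∈ A := h j (le_refl _) (by simp [hj]; omega)
      have hadj : (subGraph (pends k) A).Adj u j.succ := by
        rw [adj_iff]
        exact ⟨j, hjA, Or.inl ⟨Fin.ext rfl, rfl⟩⟩
      have hle : j.succ ≤ v := by
        rw [Fin.le_def]; simp [hj]; omega
      have hrest : (subGraph (pends k) A).Reachable j.succ v := by
        apply ih j.succ hle
        · intro i hi1 hi2
          exact h i (by simp [hj] at hi1; omega) hi2
        · simp [hj]; omega
      exact (hadj.reachable).trans hrest

section Leaders
variable {k : ℕ} (A : Finset (Fin k))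

def leaders : Finset (Fin (k+1)) := insert 0 (Aᶜ.image Fin.succ)

lemma zero_mem_leaders : (0 : Fin (k+1)) ∈ leaders A := Finset.mem_insert_self _ _

lemma succ_mem_leaders_iff (i : Fin k) : i.succ ∈ leaders A ↔ i ∉ A := by
  simp only [leaders, Finset.mem_insert, Finset.mem_image, Finset.mem_compl]
  constructor
  · rintro (h | ⟨j, hj, hje⟩)
    · exact absurd (congrArg Fin.val h) (by simp)
    · rwa [Fin.succ_inj.mp hje] at hj
  · intro h; exact Or.inr ⟨i, h, rfl⟩

def lead (v : Fin (k+1)) : Fin (k+1) :=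
  ((leaders A).filter (· ≤ v)).max'
    ⟨0, Finset.mem_filter.mpr ⟨zero_mem_leaders A, Fin.zero_le v⟩⟩

lemma lead_mem (v : Fin (k+1)) : lead A v ∈ leaders A ∧ lead A v ≤ v := by
  have h := Finset.max'_mem ((leaders A).filter (· ≤ v))
    ⟨0, Finset.mem_filter.mpr ⟨zero_mem_leaders A, Fin.zero_le v⟩⟩
  rw [Finset.mem_filter] at h
  exact ⟨h.1, h.2⟩

lemma lead_le_of_mem {w v : Fin (k+1)} (hw : w ∈ leaders A) (hwv : w ≤ v) :
    w ≤ lead A v :=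
  Finset.le_max' ((leaders A).filter (· ≤ v)) w (Finset.mem_filter.mpr ⟨hw, hwv⟩)

lemma lead_leader {w : Fin (k+1)} (hw : w ∈ leaders A) : lead A w = w :=
  le_antisymm (lead_mem A w).2 (lead_le_of_mem A hw le_rfl)

lemma lead_adj {a b : Fin (k+1)} (hab : (subGraph (pends k) A).Adj a b) :
    lead A a = lead A b := by
  rw [adj_iff] at hab
  obtain ⟨i, hi, h⟩ := hab
  have key : ∀ x : Fin (k+1), x ∈ leaders A → (x ≤ i.castSucc ↔ x ≤ i.succ) := by
    intro x hx
    constructor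
    · intro hle; exact hle.trans (by rw [Fin.le_def]; simp)
    · intro hle
      rcases lt_or_eq_of_le hle with hlt | heq
      · rw [Fin.le_def]; rw [Fin.lt_def] at hlt; simp at hlt ⊢; omega
      · exact absurd hi (by rw [← (succ_mem_leaders_iff A i)]; rwa [heq] at hx)
  have hfe : (leaders A).filter (· ≤ i.castSucc) = (leaders A).filter (· ≤ i.succ) := by
    ext x
    simp only [Finset.mem_filter]
    exact and_congr_right (fun hx => by simpa using key x hx)
  rcases h with ⟨ha, hb⟩ | ⟨ha, hb⟩ <;> subst ha <;> subst hb <;>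
    simp only [lead] <;> congr 1 <;> first | exact hfe | exact hfe.symm

lemma reach_lead (v : Fin (k+1)) : (subGraph (pends k) A).Reachable (lead A v) v := by
  rw [reach_iff A _ _ (lead_mem A v).2]
  intro i h1 h2
  by_contra hiA
  have hmem : i.succ ∈ leaders A := (succ_mem_leaders_iff A i).mpr hiA
  have hle : i.succ ≤ v := by rw [Fin.le_def]; simp; omega
  have := lead_le_of_mem A hmem hle
  rw [Fin.le_def] at this; simp at this; omega

lemma kappa_eq : kappa (pends k) A = k + 1 - A.card := by
  have hbij : Function.Bijective
      (fun w : {x // x ∈ leaders A} => (subGraph (pends k) A).connectedComponentMk w.1) := by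
    constructor
    · rintro ⟨w1, h1⟩ ⟨w2, h2⟩ he
      have hr : (subGraph (pends k) A).Reachable w1 w2 :=
        (SimpleGraph.ConnectedComponent.eq).mp he
      have := reach_const (lead A) (fun a b hab => lead_adj A hab) hr
      rw [lead_leader A h1, lead_leader A h2] at this
      exact Subtype.ext this
    · intro c
      induction c using SimpleGraph.ConnectedComponent.ind with
      | _ v =>
        exact ⟨⟨lead A v, (lead_mem A v).1⟩,
          SimpleGraph.ConnectedComponent.sound (reach_lead A v)⟩
  have h1 : kappa (pends k) A = Nat.card {x // x ∈ leaders A} :=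
    (Nat.card_eq_of_bijective _ hbij).symm
  rw [h1, Nat.card_eq_fintype_card, Fintype.card_coe]
  have h0 : (0 : Fin (k+1)) ∉ Aᶜ.image Fin.succ := by
    simp only [Finset.mem_image]
    rintro ⟨j, hj, hje⟩
    exact absurd (congrArg Fin.val hje) (by simp)
  rw [leaders, Finset.card_insert_of_notMem h0,
    Finset.card_image_of_injective _ (Fin.succ_injective k),
    Finset.card_compl, Fintype.card_fin]
  have := Finset.card_le_univ A
  simp at this
  omega
end Leaders

lemma reach_zero_last_iff {k : ℕ} (A : Finset (Fin k)) :
    (subGraph (pends k) A).Reachable 0 (Fin.last k) ↔ A = Finset.univ := by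
  rw [reach_iff A 0 (Fin.last k) (Fin.zero_le _)]
  constructor
  · intro h; ext i; simp only [Finset.mem_univ, iff_true]
    exact h i (Nat.zero_le _) (by simpa using i.isLt)
  · intro h i _ _; simp [h]

lemma sum_all (q α : ℝ) (k : ℕ) :
    ∑ A : Finset (Fin k), α ^ A.card * q ^ (k - A.card) = (α + q) ^ k := by
  have h := Finset.prod_add (fun _ : Fin k => α) (fun _ => q) Finset.univ
  rw [Finset.prod_const, Finset.card_univ, Fintype.card_fin, Finset.powerset_univ] at h
  rw [h]
  apply Finset.sum_congr rfl
  intro A _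
  rw [Finset.prod_const, Finset.prod_const, Finset.card_univ_diff, Fintype.card_fin]

lemma sum_all' (q α : ℝ) (k : ℕ) :
    ∑ A : Finset (Fin k), α ^ A.card * q ^ (k + 1 - A.card) = q * (α + q) ^ k := by
  rw [← sum_all q α k, Finset.mul_sum]
  apply Finset.sum_congr rfl
  intro A _
  have hc : A.card ≤ k := by
    have := Finset.card_le_univ A; simpa using this
  have : k + 1 - A.card = (k - A.card) + 1 := by omega
  rw [this, pow_succ]; ring

lemma Zcond_univ {V E : Type*} [Fintype E] (q : ℝ) (ends : E → V × V) (w : E → ℝ)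
    (P : Finset E → Prop) (h : ∀ A, P A ↔ A = Finset.univ) :
    Zcond q ends w P
      = (∏ e ∈ (Finset.univ : Finset E), w e) * q ^ kappa ends Finset.univ := by
  rw [Zcond, Finset.sum_eq_single Finset.univ]
  · exact if_pos ((h _).mpr rfl)
  · intro A _ hA; exact if_neg (fun hP => hA ((h A).mp hP))
  · intro h'; exact absurd (Finset.mem_univ _) h'

lemma Zcond_not_univ {V E : Type*} [Fintype E] (q : ℝ) (ends : E → V × V) (w : E → ℝ)
    (P : Finset E → Prop) (h : ∀ A, P A ↔ ¬ A = Finset.univ) :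
    Zcond q ends w P
      = (∑ A : Finset E, (∏ e ∈ A, w e) * q ^ kappa ends A)
        - (∏ e ∈ (Finset.univ : Finset E), w e) * q ^ kappa ends Finset.univ := by
  rw [Zcond]
  have key : ∀ A : Finset E,
      (if P A then (∏ e ∈ A, w e) * q ^ kappa ends A else 0)
      = (∏ e ∈ A, w e) * q ^ kappa ends A
        - (if A = Finset.univ then (∏ e ∈ A, w e) * q ^ kappa ends A else 0) := by
    intro A
    by_cases hA : A = Finset.univ
    · rw [if_neg (fun hP => ((h A).mp hP) hA), if_pos hA, sub_self]
    · rw [if_pos ((h A).mpr hA), if_neg hA, sub_zero]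
  rw [Finset.sum_congr rfl fun A _ => key A, Finset.sum_sub_distrib]
  congr 1
  rw [Finset.sum_eq_single Finset.univ]
  · exact if_pos rfl
  · intro A _ hA; exact if_neg hA
  · intro h'; exact absurd (Finset.mem_univ _) h'

/-- The `k`-stretch (series composition of `k` edges of weight `α` along a path
from `s = 0` to `t = Fin.last k`) implements a weight `α' = q Z_{st}/Z_{s|t}`
satisfying `1 + q/α' = (1 + q/α)^k`. -/
theorem kStretch (q α : ℝ) (k : ℕ) (hq : q ≠ 0) (hα : α ≠ 0) :
    let ends : Fin k → Fin (k + 1) × Fin (k + 1) := fun i => (i.castSucc, i.succ)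
    let w : Fin k → ℝ := fun _ => α
    let Zst := Zcond q ends w (fun A => (subGraph ends A).Reachable 0 (Fin.last k))
    let Zsep := Zcond q ends w (fun A => ¬ (subGraph ends A).Reachable 0 (Fin.last k))
    Zsep ≠ 0 → q * Zst / Zsep ≠ 0 →
      1 + q / (q * Zst / Zsep) = (1 + q / α) ^ k := by
  intro ends w Zst Zsep hsep hne
  have ht : ∀ A : Finset (Fin k),
      (∏ _e ∈ A, α) * q ^ kappa (pends k) A = α ^ A.card * q ^ (k + 1 - A.card) := by
    intro A
    rw [Finset.prod_const, kappa_eq]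
  have htuniv : (∏ _e ∈ (Finset.univ : Finset (Fin k)), α)
      * q ^ kappa (pends k) Finset.univ = α ^ k * q := by
    rw [ht, Finset.card_univ, Fintype.card_fin]
    norm_num
  have hZst : Zst = α ^ k * q := by
    show Zcond q (pends k) (fun _ => α)
      (fun A => (subGraph (pends k) A).Reachable 0 (Fin.last k)) = α ^ k * q
    rw [Zcond_univ q (pends k) (fun _ => α) _ (fun A => reach_zero_last_iff A)]
    exact htuniv
  have hZsep : Zsep = q * ((α + q) ^ k - α ^ k) := by
    show Zcond q (pends k) (fun _ => α)
      (fun A => ¬ (subGraph (pends k) A).Reachable 0 (Fin.last k)) = q * ((α + q) ^ k - α ^ k)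
    rw [Zcond_not_univ q (pends k) (fun _ => α) _
        (fun A => not_congr (reach_zero_last_iff A)),
      Finset.sum_congr rfl fun A _ => ht A, sum_all' q α k, htuniv]
    ring
  have hαk : α ^ k ≠ 0 := pow_ne_zero _ hα
  have hD : (α + q) ^ k - α ^ k ≠ 0 := by
    intro h; apply hsep; rw [hZsep, h, mul_zero]
  rw [hZst, hZsep]
  have hbase : 1 + q / α = (α + q) / α := by field_simp
  rw [hbase, div_pow]
  field_simp
  ring
end
end

section
/- Let H be a graph with m' edges and let G be the 3-stretch of H (each edge of H replaced by a path of length 3). Then the maximum size of an independent set in G equals m' plus the maximum size of an independent set in H. -/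
/-!
An independent set of the 3-stretch contains at most one internal vertex of each edge path, and
none on the path of an edge of `H` whose two endpoints it contains; deleting one endpoint of each
such edge leaves an independent set of `H`. Conversely, an independent set of `H` extends by one
internal vertex on every edge path.
-/

open scoped Classical

noncomputable section

/-- The 3-stretch of a simple graph `H`: every edge `e = {u,v}` of `H`
(with endpoints labelled `(p e).1 = u` and `(p e).2 = v`) is replaced by the
path `u — (e,0) — (e,1) — v` with two fresh internal vertices. -/
def ThreeStretch {V : Type*} (H : SimpleGraph V) (p : H.edgeSet → V × V) :
    SimpleGraph (V ⊕ (H.edgeSet × Fin 2)) :=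
  SimpleGraph.fromRel (fun x y =>
    match x, y with
    | Sum.inl u, Sum.inr (e, i) => (i = 0 ∧ u = (p e).1) ∨ (i = 1 ∧ u = (p e).2)
    | Sum.inr (e, i), Sum.inr (f, j) => e = f ∧ i ≠ j
    | _, _ => False)

/-- `S` is an independent set of `G`: no two of its vertices are adjacent. -/
def IsIndep {V : Type*} (G : SimpleGraph V) (S : Finset V) : Prop :=
  ∀ u ∈ S, ∀ v ∈ S, ¬ G.Adj u v

open Finset

namespace ThreeStretch

variable {V : Type*} {H : SimpleGraph V} {p : H.edgeSet → V × V}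

@[simp] lemma not_adj_inl_inl (u v : V) : ¬ (ThreeStretch H p).Adj (.inl u) (.inl v) := by
  simp [ThreeStretch]

@[simp] lemma adj_inl_inr_iff (u : V) (e : H.edgeSet) (i : Fin 2) :
    (ThreeStretch H p).Adj (.inl u) (.inr (e, i)) ↔
      (i = 0 ∧ u = (p e).1) ∨ (i = 1 ∧ u = (p e).2) := by
  simp [ThreeStretch]

@[simp] lemma adj_inr_inr_iff (e f : H.edgeSet) (i j : Fin 2) :
    (ThreeStretch H p).Adj (.inr (e, i)) (.inr (f, j)) ↔ e = f ∧ i ≠ j := by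
  simp only [ThreeStretch, SimpleGraph.fromRel_adj, ne_eq, Sum.inr.injEq, Prod.mk.injEq]
  grind

lemma isIndep_iff {S : Finset (V ⊕ (H.edgeSet × Fin 2))} :
    IsIndep (ThreeStretch H p) S ↔ ∀ e : H.edgeSet,
      ¬ (.inr (e, 0) ∈ S ∧ .inr (e, 1) ∈ S) ∧
      (.inr (e, 0) ∈ S → .inl (p e).1 ∉ S) ∧ (.inr (e, 1) ∈ S → .inl (p e).2 ∉ S) := by
  constructor
  · intro hS e
    refine ⟨fun h => hS _ h.1 _ h.2 (by simp), fun h0 h1 => hS _ h1 _ h0 (by simp),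
      fun h1 h2 => hS _ h2 _ h1 (by simp)⟩
  · intro hS
    have inl_inr : ∀ u e i, .inl u ∈ S → .inr (e, i) ∈ S →
        ¬ (ThreeStretch H p).Adj (.inl u) (.inr (e, i)) := by
      intro u e i hu hei hadj
      obtain ⟨rfl, rfl⟩ | ⟨rfl, rfl⟩ := (adj_inl_inr_iff u e i).1 hadj
      exacts [(hS e).2.1 hei hu, (hS e).2.2 hei hu]
    rintro (u | ⟨e, i⟩) hu (v | ⟨f, j⟩) hv hadj
    · exact not_adj_inl_inl u v hadj
    · exact inl_inr u f j hu hv hadj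
    · exact inl_inr v e i hv hu hadj.symm
    · obtain ⟨rfl, hij⟩ := (adj_inr_inr_iff e f i j).1 hadj
      fin_cases i <;> fin_cases j
      all_goals first | exact hij rfl | exact (hS e).1 ⟨‹_›, ‹_›⟩

/-- On each edge `e` keep the internal vertex away from `(p e).1` if `(p e).1 ∈ T`, and the one
next to it otherwise; in the first case `(p e).2 ∉ T` because `T` is independent. -/
lemma exists_isIndep_card_eq [Fintype H.edgeSet] (hadj : ∀ e, H.Adj (p e).1 (p e).2)
    {T : Finset V} (hT : IsIndep H T) :
    ∃ S, IsIndep (ThreeStretch H p) S ∧ #S = #T + Fintype.card H.edgeSet := by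
  refine ⟨T.disjSum (univ.image fun e => (e, if (p e).1 ∈ T then 1 else 0)),
    isIndep_iff.2 fun e => ?_, ?_⟩
  · by_cases h : (p e).1 ∈ T
    · have h2 : (p e).2 ∉ T := fun h2 => hT _ h _ h2 (hadj e)
      simp [h, h2]
    · simp [h]
  · rw [card_disjSum, card_image_of_injective _ fun e f h => congrArg Prod.fst h, card_univ]

variable (p) in
def spannedEdges [Fintype H.edgeSet] (A : Finset V) : Finset H.edgeSet :=
  univ.filter fun e => (p e).1 ∈ A ∧ (p e).2 ∈ A

lemma card_toRight_add_card_spannedEdges_le [Fintype H.edgeSet]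
    {S : Finset (V ⊕ (H.edgeSet × Fin 2))} (hS : IsIndep (ThreeStretch H p) S) :
    #S.toRight + #(spannedEdges p S.toLeft) ≤ Fintype.card H.edgeSet := by
  have hS := isIndep_iff.1 hS
  have hinj : Set.InjOn Prod.fst (S.toRight : Set (H.edgeSet × Fin 2)) := by
    rintro ⟨e, i⟩ hi ⟨f, j⟩ hj (rfl : e = f)
    simp only [mem_coe, mem_toRight] at hi hj
    fin_cases i <;> fin_cases j
    all_goals first | rfl | exact absurd ⟨‹_›, ‹_›⟩ (hS e).1
  have hdisj : Disjoint (S.toRight.image Prod.fst) (spannedEdges p S.toLeft) := by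
    simp only [disjoint_left, mem_image, spannedEdges, mem_filter, mem_univ, true_and,
      mem_toLeft, mem_toRight]
    rintro _ ⟨⟨e, i⟩, hi, rfl⟩ ⟨h1, h2⟩
    fin_cases i
    exacts [(hS e).2.1 hi h1, (hS e).2.2 hi h2]
  calc #S.toRight + #(spannedEdges p S.toLeft)
      = #(S.toRight.image Prod.fst ∪ spannedEdges p S.toLeft) := by
        rw [card_union_of_disjoint hdisj, card_image_of_injOn hinj]
    _ ≤ Fintype.card H.edgeSet := card_le_univ _

lemma isIndep_sdiff_image_spannedEdges [Fintype H.edgeSet]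
    (hp : ∀ e : H.edgeSet, s((p e).1, (p e).2) = (e : Sym2 V)) (A : Finset V) :
    IsIndep H (A \ (spannedEdges p A).image fun e => (p e).1) := by
  intro u hu v hv huv
  set e : H.edgeSet := ⟨s(u, v), huv⟩
  have hpe : (p e).1 = u ∧ (p e).2 = v ∨ (p e).1 = v ∧ (p e).2 = u := Sym2.eq_iff.1 (hp e)
  simp only [mem_sdiff, mem_image, spannedEdges, mem_filter, mem_univ, true_and,
    not_exists, not_and] at hu hv
  rcases hpe with ⟨h1, h2⟩ | ⟨h1, h2⟩
  · exact hu.2 e (by rw [h1, h2]; exact ⟨hu.1, hv.1⟩) h1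
  · exact hv.2 e (by rw [h1, h2]; exact ⟨hv.1, hu.1⟩) h1

lemma exists_isIndep_card_le [Fintype H.edgeSet]
    (hp : ∀ e : H.edgeSet, s((p e).1, (p e).2) = (e : Sym2 V))
    {S : Finset (V ⊕ (H.edgeSet × Fin 2))} (hS : IsIndep (ThreeStretch H p) S) :
    ∃ T, IsIndep H T ∧ #S ≤ Fintype.card H.edgeSet + #T := by
  set X := (spannedEdges p S.toLeft).image fun e => (p e).1
  refine ⟨S.toLeft \ X, isIndep_sdiff_image_spannedEdges hp _, ?_⟩
  have hedges := card_toRight_add_card_spannedEdges_le hS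
  have hX : #X ≤ #(spannedEdges p S.toLeft) := card_image_le
  have hleft : #S.toLeft ≤ #(S.toLeft \ X) + #X := card_le_card_sdiff_add_card
  have hsplit := card_toLeft_add_card_toRight (u := S)
  omega

end ThreeStretch

theorem threeStretch_max_indep_general {V : Type*} [Fintype V]
    (H : SimpleGraph V) [DecidableRel H.Adj]
    (p : H.edgeSet → V × V) (hp : ∀ e : H.edgeSet, s((p e).1, (p e).2) = (e : Sym2 V))
    (m' k : ℕ) (hm : H.edgeFinset.card = m')
    (hk : IsGreatest {n | ∃ S : Finset V, IsIndep H S ∧ S.card = n} k) :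
    IsGreatest {n | ∃ S : Finset (V ⊕ (H.edgeSet × Fin 2)),
      IsIndep (ThreeStretch H p) S ∧ S.card = n} (m' + k) := by
  have hadj (e : H.edgeSet) : H.Adj (p e).1 (p e).2 := by
    rw [← SimpleGraph.mem_edgeSet, hp e]
    exact e.2
  rw [SimpleGraph.edgeFinset_card] at hm
  obtain ⟨⟨T, hT, rfl⟩, hmax⟩ := hk
  refine ⟨?_, ?_⟩
  · obtain ⟨S, hS, hcard⟩ := ThreeStretch.exists_isIndep_card_eq hadj hT
    exact ⟨S, hS, by omega⟩
  · rintro _ ⟨S, hS, rfl⟩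
    obtain ⟨T', hT', hcard⟩ := ThreeStretch.exists_isIndep_card_le hp hS
    have := hmax ⟨T', hT', rfl⟩
    omega

/-- The maximum size of an independent set in the 3-stretch `G` of `H` equals
`m'` (the number of edges of `H`) plus the maximum size of an independent set in `H`. -/
theorem threeStretch_max_indep {V : Type*} [Fintype V] [DecidableEq V]
    (H : SimpleGraph V) [DecidableRel H.Adj]
    (p : H.edgeSet → V × V) (hp : ∀ e : H.edgeSet, s((p e).1, (p e).2) = (e : Sym2 V))
    (m' k : ℕ) (hm : H.edgeFinset.card = m')
    (hk : IsGreatest {n | ∃ S : Finset V, IsIndep H S ∧ S.card = n} k) :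
    IsGreatest {n | ∃ S : Finset (V ⊕ (H.edgeSet × Fin 2)),
      IsIndep (ThreeStretch H p) S ∧ S.card = n} (m' + k) :=
  threeStretch_max_indep_general H p hp m' k hm hk
end
end

section
/- If H has an independent set of size k, then its 3-stretch G has an independent set of size m' + k, where m' is the number of edges of H. -/
open scoped Classical

noncomputable section

/-- If `H` has an independent set of size `k`, then its 3-stretch has an
independent set of size `m' + k`, where `m'` is the number of edges of `H`. -/
theorem threeStretch_indep_of_indep {V : Type*} [Fintype V] [DecidableEq V]
    (H : SimpleGraph V) [DecidableRel H.Adj]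
    (p : H.edgeSet → V × V) (hp : ∀ e : H.edgeSet, s((p e).1, (p e).2) = (e : Sym2 V))
    (m' k : ℕ) (hm : H.edgeFinset.card = m')
    (h : ∃ S : Finset V, IsIndep H S ∧ S.card = k) :
    ∃ S : Finset (V ⊕ (H.edgeSet × Fin 2)),
      IsIndep (ThreeStretch H p) S ∧ S.card = m' + k := by
  obtain ⟨S, hS, hSk⟩ := h
  -- endpoints of each edge are adjacent in H
  have hadj : ∀ e : H.edgeSet, H.Adj (p e).1 (p e).2 := by
    intro e
    have : s((p e).1, (p e).2) ∈ H.edgeSet := by rw [hp e]; exact e.2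
    exact this
  set f : H.edgeSet → (V ⊕ (H.edgeSet × Fin 2)) :=
    fun e => Sum.inr (e, if (p e).1 ∈ S then 1 else 0) with hf
  refine ⟨(Finset.univ.image f) ∪ S.image Sum.inl, ?_, ?_⟩
  · intro x hx y hy hxy
    have hmem : ∀ z ∈ (Finset.univ.image f) ∪ S.image Sum.inl,
        (∃ e : H.edgeSet, z = f e) ∨ (∃ u ∈ S, z = Sum.inl u) := by
      intro z hz
      rcases Finset.mem_union.1 hz with hz | hz
      · left; obtain ⟨e, _, he⟩ := Finset.mem_image.1 hz; exact ⟨e, he.symm⟩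
      · right; obtain ⟨u, hu, he⟩ := Finset.mem_image.1 hz; exact ⟨u, hu, he.symm⟩
    have key : ∀ u ∈ S, ∀ e : H.edgeSet, ¬ (ThreeStretch H p).Adj (Sum.inl u) (f e) := by
      intro u hu e hadj'
      rw [ThreeStretch, SimpleGraph.fromRel_adj] at hadj'
      obtain ⟨-, hrel⟩ := hadj'
      simp only [hf] at hrel
      by_cases h1 : (p e).1 ∈ S
      · simp only [if_pos h1] at hrel
        rcases hrel with (⟨h0, _⟩ | ⟨_, hu2⟩) | h'
        · exact absurd h0 (by decide)
        · exact hS (p e).1 h1 u hu (hu2 ▸ hadj e)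
        · exact h'
      · simp only [if_neg h1] at hrel
        rcases hrel with (⟨_, hu1⟩ | ⟨h0, _⟩) | h'
        · exact h1 (hu1 ▸ hu)
        · exact absurd h0 (by decide)
        · exact h'
    rcases hmem x hx with ⟨e, rfl⟩ | ⟨u, hu, rfl⟩ <;>
      rcases hmem y hy with ⟨e', rfl⟩ | ⟨v, hv, rfl⟩
    · rw [ThreeStretch, SimpleGraph.fromRel_adj] at hxy
      obtain ⟨hne, hrel⟩ := hxy
      simp only [hf] at hrel
      rcases hrel with ⟨rfl, _⟩ | ⟨rfl, _⟩ <;> exact hne rfl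
    · exact key v hv e ((ThreeStretch H p).adj_symm hxy)
    · exact key u hu e' hxy
    · rw [ThreeStretch, SimpleGraph.fromRel_adj] at hxy
      exact hxy.2.elim id id
  · rw [Finset.card_union_of_disjoint, Finset.card_image_of_injective _ Sum.inl_injective,
      Finset.card_image_of_injective, Finset.card_univ, hSk]
    · rw [← hm, ← SimpleGraph.edgeFinset_card]
    · intro a b hab
      simp only [hf, Sum.inr.injEq, Prod.mk.injEq] at hab
      exact hab.1
    · rw [Finset.disjoint_left]
      rintro z hz hz'
      obtain ⟨e, _, he⟩ := Finset.mem_image.1 hz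
      obtain ⟨u, _, hu⟩ := Finset.mem_image.1 hz'
      rw [← hu] at he
      simp [hf] at he
end
end

section
/- In the 3-stretch G of a cubic graph H, where G has n vertices, every independent set of G has size at most (5/8)n. -/
open scoped Classical

noncomputable section

/-- In the 3-stretch `G` of a cubic graph `H`, where `G` has `n` vertices,
every independent set of `G` has size at most `(5/8)n`. -/
theorem threeStretch_indep_le {V : Type*} [Fintype V] [DecidableEq V]
    (H : SimpleGraph V) [DecidableRel H.Adj] (hcubic : H.IsRegularOfDegree 3)
    (p : H.edgeSet → V × V) (hp : ∀ e : H.edgeSet, s((p e).1, (p e).2) = (e : Sym2 V))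
    (n : ℕ) (hn : n = Fintype.card (V ⊕ (H.edgeSet × Fin 2)))
    (S : Finset (V ⊕ (H.edgeSet × Fin 2))) (hS : IsIndep (ThreeStretch H p) S) :
    8 * S.card ≤ 5 * n := by
  classical
  set m := Fintype.card H.edgeSet with hm
  -- handshake: 3 * |V| = 2 * m
  have hhand : 3 * Fintype.card V = 2 * m := by
    have h1 := H.sum_degrees_eq_twice_card_edges
    have h2 : ∑ v, H.degree v = 3 * Fintype.card V := by
      simp [hcubic _, Finset.sum_const, mul_comm]
    have h3 : m = H.edgeFinset.card := by
      rw [hm, SimpleGraph.edgeFinset, Set.toFinset_card]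
    omega
  -- projection map
  have hcard : S.card ≤ Fintype.card V + m := by
    have hinj : Set.InjOn (fun x : V ⊕ (H.edgeSet × Fin 2) =>
        (match x with
          | Sum.inl u => Sum.inl u
          | Sum.inr (e, _) => Sum.inr e : V ⊕ H.edgeSet)) S := by
      intro x hx y hy hxy
      match x, y with
      | Sum.inl u, Sum.inl v => simpa using hxy
      | Sum.inl u, Sum.inr (e, i) => simp at hxy
      | Sum.inr (e, i), Sum.inl v => simp at hxy
      | Sum.inr (e, i), Sum.inr (f, j) =>
        simp only [Sum.inr.injEq] at hxy
        subst hxy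
        by_cases hij : i = j
        · subst hij; rfl
        · exfalso
          exact hS _ hx _ hy (by
            constructor
            · simp [hij]
            · left; exact ⟨rfl, hij⟩)
    calc S.card = (S.image _).card := (Finset.card_image_of_injOn hinj).symm
      _ ≤ Fintype.card (V ⊕ H.edgeSet) := Finset.card_le_univ _
      _ = Fintype.card V + m := by rw [Fintype.card_sum]
  have hncard : n = Fintype.card V + 2 * m := by
    rw [hn, Fintype.card_sum, Fintype.card_prod, Fintype.card_fin, hm]; ring
  omega
end
end

section
/- Let x_1 > 1, q > 0 and define y_j = q/(x_1^j − 1) + 1 for integers j ≥ 1, and given a target T > 1 recursively define nonnegative integers d_j = ⌊ log(T · ∏_{ℓ<j} y_ℓ^{−d_ℓ}) / log(y_j) ⌋ and y''_m = ∏_{ℓ=1}^m y_ℓ^{d_ℓ}. Then for every m ≥ 1, T/y_m ≤ y''_m ≤ T. -/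
lemma floor_pow_bound (R b : ℝ) (hR : 1 ≤ R) (hb : 1 < b) (n : ℕ)
    (hn : n = ⌊Real.log R / Real.log b⌋₊) : b ^ n ≤ R ∧ R < b ^ (n + 1) := by
  have hb0 : 0 < Real.log b := Real.log_pos hb
  have hbpos : (0:ℝ) < b := lt_trans one_pos hb
  have hRpos : (0:ℝ) < R := lt_of_lt_of_le one_pos hR
  have hR0 : 0 ≤ Real.log R := Real.log_nonneg hR
  have h1 : (n : ℝ) ≤ Real.log R / Real.log b := by
    rw [hn]; exact Nat.floor_le (div_nonneg hR0 hb0.le)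
  have h2 : Real.log R / Real.log b < n + 1 := by
    rw [hn]; push_cast; exact Nat.lt_floor_add_one _
  constructor
  · have : (n : ℝ) * Real.log b ≤ Real.log R := (le_div_iff₀ hb0).mp h1
    have hlog : Real.log (b ^ n) ≤ Real.log R := by rwa [Real.log_pow]
    exact (Real.log_le_log_iff (by positivity) hRpos).mp hlog
  · have : Real.log R < ((n : ℝ) + 1) * Real.log b := (div_lt_iff₀ hb0).mp h2
    have hlog : Real.log R < Real.log (b ^ (n + 1)) := by
      rwa [Real.log_pow, Nat.cast_add, Nat.cast_one]
    exact (Real.log_lt_log_iff hRpos (by positivity)).mp hlog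

/-- With `q > 0`, `x1 > 1`, `T > 1`, `y j = q/(x1^j - 1) + 1`, the recursively
defined exponents `d j = ⌊log(T · ∏_{ℓ<j} y ℓ^{-d ℓ}) / log (y j)⌋` and partial
products `y'' m = ∏_{ℓ=1}^m (y ℓ)^(d ℓ)` satisfy `T / y m ≤ y'' m ≤ T` for all `m ≥ 1`. -/
theorem partial_products_bound (q x1 T : ℝ) (hq : 0 < q) (hx : 1 < x1) (hT : 1 < T)
    (y : ℕ → ℝ) (hy : ∀ j : ℕ, 1 ≤ j → y j = q / (x1 ^ j - 1) + 1)
    (d : ℕ → ℕ)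
    (hd : ∀ j : ℕ, 1 ≤ j →
      d j = ⌊Real.log (T / ∏ ℓ ∈ Finset.Ico 1 j, y ℓ ^ d ℓ) / Real.log (y j)⌋₊)
    (y'' : ℕ → ℝ) (hy'' : ∀ m : ℕ, y'' m = ∏ ℓ ∈ Finset.Icc 1 m, y ℓ ^ d ℓ) :
    ∀ m : ℕ, 1 ≤ m → T / y m ≤ y'' m ∧ y'' m ≤ T := by
  have hy1 : ∀ j : ℕ, 1 ≤ j → 1 < y j := by
    intro j hj
    rw [hy j hj]
    have hpow : (1:ℝ) < x1 ^ j := one_lt_pow₀ hx (by omega)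
    have : 0 < q / (x1 ^ j - 1) := div_pos hq (by linarith)
    linarith
  have key : ∀ m : ℕ, 1 ≤ m →
      (∏ ℓ ∈ Finset.Icc 1 m, y ℓ ^ d ℓ) ≤ T ∧
      T < (∏ ℓ ∈ Finset.Icc 1 m, y ℓ ^ d ℓ) * y m := by
    intro m hm
    induction m, hm using Nat.le_induction with
    | base =>
      have h1 := floor_pow_bound T (y 1) (le_of_lt hT) (hy1 1 le_rfl) (d 1) (by
        have := hd 1 le_rfl
        simpa using this)
      simp only [Finset.Icc_self, Finset.prod_singleton]
      constructor
      · exact h1.1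
      · calc T < y 1 ^ (d 1 + 1) := h1.2
          _ = y 1 ^ d 1 * y 1 := by ring
    | succ m hm ih =>
      set P := ∏ ℓ ∈ Finset.Icc 1 m, y ℓ ^ d ℓ with hP
      have hPpos : 0 < P := Finset.prod_pos (fun ℓ hℓ => by
        have := hy1 ℓ (Finset.mem_Icc.mp hℓ).1
        positivity)
      have hR1 : 1 ≤ T / P := (one_le_div hPpos).mpr ih.1
      have hdm : d (m+1) = ⌊Real.log (T / P) / Real.log (y (m+1))⌋₊ := by
        have := hd (m+1) (by omega)
        rwa [Finset.Ico_add_one_right_eq_Icc] at this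
      have h1 := floor_pow_bound (T / P) (y (m+1)) hR1 (hy1 (m+1) (by omega)) (d (m+1)) hdm
      have hprod : (∏ ℓ ∈ Finset.Icc 1 (m+1), y ℓ ^ d ℓ) = P * y (m+1) ^ d (m+1) :=
        Finset.prod_Icc_succ_top (by omega) _
      rw [hprod]
      constructor
      · calc P * y (m+1) ^ d (m+1) ≤ P * (T / P) :=
            mul_le_mul_of_nonneg_left h1.1 (le_of_lt hPpos)
          _ = T := by field_simp
      · have : T / P < y (m+1) ^ d (m+1) * y (m+1) := by
          calc T / P < y (m+1) ^ (d (m+1) + 1) := h1.2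
            _ = y (m+1) ^ d (m+1) * y (m+1) := by ring
        calc T = P * (T / P) := by field_simp
          _ < P * (y (m+1) ^ d (m+1) * y (m+1)) := by
              exact mul_lt_mul_of_pos_left this hPpos
          _ = P * y (m+1) ^ d (m+1) * y (m+1) := by ring
  intro m hm
  have h := key m hm
  have hympos : 0 < y m := lt_trans one_pos (hy1 m hm)
  rw [hy'' m]
  exact ⟨(div_le_iff₀ hympos).mpr (le_of_lt h.2), h.1⟩
end

section
/- Let q < 0, a ≤ −3, ε > 0 real with a^3 + 3a^2 − q ∈ [ε, 2ε] and q + 2ε ≤ q/2. Then −((4/3)|q| + 1) ≤ a^2 + 3a + q ≤ −(2/3)|q| < 0. -/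
/-! With `s = a² + 3a ≥ 0` and `a ≤ -3`, the identity `a³ + 3a² = a s` gives
`-3 s ≥ a³ + 3a² ≥ q + ε > q`, so `q ≤ s + q ≤ q - q/3 = (2/3) q`. -/

lemma sq_add_three_mul_nonneg {a : ℝ} (ha : a ≤ -3) : 0 ≤ a ^ 2 + 3 * a := by
  nlinarith

lemma three_mul_sq_add_three_mul_le {a : ℝ} (ha : a ≤ -3) :
    3 * (a ^ 2 + 3 * a) ≤ -(a ^ 3 + 3 * a ^ 2) := by
  have h := mul_le_mul_of_nonneg_right ha (sq_add_three_mul_nonneg ha)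
  linarith

theorem c_bounds_general (q a ε : ℝ) (hq : q < 0) (ha : a ≤ -3) (hε : 0 < ε)
    (h1 : ε ≤ a ^ 3 + 3 * a ^ 2 - q) :
    -((4 / 3) * |q| + 1) ≤ a ^ 2 + 3 * a + q ∧
      a ^ 2 + 3 * a + q ≤ -(2 / 3) * |q| ∧ -(2 / 3) * |q| < 0 := by
  rw [abs_of_neg hq]
  have hs := sq_add_three_mul_nonneg ha
  have hcube := three_mul_sq_add_three_mul_le ha
  exact ⟨by linarith, by linarith, by linarith⟩

/-- Bounds on `c = a² + 3a + q`: if `q < 0`, `a ≤ -3`, `ε > 0`,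
`a³ + 3a² - q ∈ [ε, 2ε]` and `q + 2ε ≤ q/2`, then
`-((4/3)|q| + 1) ≤ a² + 3a + q ≤ -(2/3)|q| < 0`. -/
theorem c_bounds (q a ε : ℝ) (hq : q < 0) (ha : a ≤ -3) (hε : 0 < ε)
    (h1 : ε ≤ a ^ 3 + 3 * a ^ 2 - q) (h2 : a ^ 3 + 3 * a ^ 2 - q ≤ 2 * ε)
    (h3 : q + 2 * ε ≤ q / 2) :
    -((4 / 3) * |q| + 1) ≤ a ^ 2 + 3 * a + q ∧
      a ^ 2 + 3 * a + q ≤ -(2 / 3) * |q| ∧ -(2 / 3) * |q| < 0 :=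
  c_bounds_general q a ε hq ha hε h1
end

section
/- Let Y be the weighted graph on vertices {0,1,2,0̄,1̄,2̄} with edges (0,0̄),(1,1̄),(2,2̄) of weight b and edges (0̄,1̄),(1̄,2̄),(2̄,0̄) of weight a. Then the contribution Z_{012} to the multivariate Tutte polynomial Z(Y;q,w) from edge-subsets in which 0, 1, 2 all lie in one component equals q·a^2·(a+3)·b^3. -/
open scoped Classical

noncomputable section

/-- Endpoints of the edges of the triangle gadget `Y`: vertices `0,1,2` are the
outer vertices, `3,4,5` stand for `0̄,1̄,2̄`.  Edges `0,1,2` are `(0,0̄),(1,1̄),(2,2̄)`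
and edges `3,4,5` are `(0̄,1̄),(1̄,2̄),(2̄,0̄)`. -/
def Yends : Fin 6 → Fin 6 × Fin 6 := ![(0, 3), (1, 4), (2, 5), (3, 4), (4, 5), (5, 3)]

/-- Edge weights of the gadget `Y`: weight `b` on the pendant edges, `a` on the triangle. -/
def Yw (a b : ℝ) : Fin 6 → ℝ := ![b, b, b, a, a, a]

/-!
The vertices `0, 1, 2` hang off the triangle `0̄1̄2̄` by their pendant edges, so they lie in one
component exactly when `A` contains all three pendant edges and at least two triangle edges (any
two triangle edges connect the triangle). Every such `A` spans a connected graph, so it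
contributes `q ∏ w`, and the four sets give `q b³ (3a² + a³)`.
-/

instance subGraph.decidableAdj {V E : Type*} [DecidableEq V] (ends : E → V × V)
    (A : Finset E) : DecidableRel (subGraph ends A).Adj := fun u v =>
  decidable_of_iff (u ≠ v ∧ ((∃ e ∈ A, ends e = (u, v) ∨ ends e = (v, u)) ∨
    (∃ e ∈ A, ends e = (v, u) ∨ ends e = (u, v)))) Iff.rfl

theorem kappa_eq_one_of_connected {V E : Type*} {ends : E → V × V} {A : Finset E}
    (h : (subGraph ends A).Connected) : kappa ends A = 1 :=
  Nat.card_eq_one_iff_unique.mpr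
    ⟨h.preconnected.subsingleton_connectedComponent,
      h.nonempty.map (subGraph ends A).connectedComponentMk⟩

theorem Zcond_eq_of_connected {V E : Type*} [Fintype E] (q : ℝ) (ends : E → V × V)
    (w : E → ℝ) (P : Finset E → Prop) (S : Finset (Finset E)) (hP : ∀ A, P A ↔ A ∈ S)
    (hS : ∀ A ∈ S, (subGraph ends A).Connected) :
    Zcond q ends w P = q * ∑ A ∈ S, ∏ e ∈ A, w e := by
  have hfilter : Finset.univ.filter P = S := by
    ext A
    simp [hP]
  rw [Zcond, ← Finset.sum_filter, hfilter, Finset.mul_sum]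
  refine Finset.sum_congr rfl fun A hA => ?_
  rw [kappa_eq_one_of_connected (hS A hA), pow_one, mul_comm]

def outerConnectedSets : Finset (Finset (Fin 6)) :=
  {{0, 1, 2, 3, 4}, {0, 1, 2, 3, 5}, {0, 1, 2, 4, 5}, {0, 1, 2, 3, 4, 5}}

theorem outer_reachable_iff_mem_outerConnectedSets (A : Finset (Fin 6)) :
    ((subGraph Yends A).Reachable 0 1 ∧ (subGraph Yends A).Reachable 0 2) ↔
      A ∈ outerConnectedSets := by
  revert A
  set_option maxRecDepth 100000 in decide

theorem connected_of_mem_outerConnectedSets :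
    ∀ A ∈ outerConnectedSets, (subGraph Yends A).Connected := by
  set_option maxRecDepth 100000 in decide

theorem sum_outerConnectedSets_prod_Yw (a b : ℝ) :
    ∑ A ∈ outerConnectedSets, ∏ e ∈ A, Yw a b e = a ^ 2 * (a + 3) * b ^ 3 := by
  rw [outerConnectedSets, Finset.sum_insert (by decide), Finset.sum_insert (by decide),
    Finset.sum_insert (by decide), Finset.sum_singleton]
  simp only [Yw, Finset.mem_insert, Finset.mem_singleton, Fin.reduceEq, zero_ne_one, or_self,
    not_false_eq_true, Finset.prod_insert, Finset.prod_singleton, Matrix.cons_val_zero,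
    Matrix.cons_val_one, Matrix.cons_val]
  ring

/-- The contribution `Z_{012}` to `Z(Y;q,w)` from edge-subsets in which the
vertices `0,1,2` all lie in one component equals `q a² (a+3) b³`. -/
theorem Z012_eval (q a b : ℝ) :
    Zcond q Yends (Yw a b)
      (fun A => (subGraph Yends A).Reachable 0 1 ∧ (subGraph Yends A).Reachable 0 2)
      = q * a ^ 2 * (a + 3) * b ^ 3 := by
  rw [Zcond_eq_of_connected q Yends (Yw a b) _ outerConnectedSets
    outer_reachable_iff_mem_outerConnectedSets connected_of_mem_outerConnectedSets,
    sum_outerConnectedSets_prod_Yw]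
  ring
end
end

section
/- For the triangle gadget Y (edges (i, ī) of weight b for i = 0,1,2 and triangle edges among 0̄,1̄,2̄ of weight a), the contribution Z_{0|12} to Z(Y;q,w) from edge-subsets in which vertex 0 is in one component and vertices 1, 2 are together in a distinct component equals q^2·a·b^2·(a^2 + 3a + q + b). -/
open scoped Classical

noncomputable section

/-!
The vertices `1` and `2` can only be joined through both pendant edges `11̄`, `22̄` and a set `T`
of triangle edges joining `1̄` to `2̄`; there are five such `T`: `{1̄2̄}`, the three pairs, and the
whole triangle. Vertex `0` then stays apart iff `00̄ ∉ A`, or `00̄ ∈ A` and `0̄` is isolated in `T`,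
i.e. `T = {1̄2̄}`. The six resulting edge sets contribute `ab²q³`, `ab³q²`, `3a²b²q²` and `a³b²q²`.
-/

open Finset

instance subGraph.decidableRelAdj {V E : Type*} [Fintype E] [DecidableEq V]
    (ends : E → V × V) (A : Finset E) : DecidableRel (subGraph ends A).Adj :=
  fun u v => decidable_of_iff
    (u ≠ v ∧ ((∃ e ∈ A, ends e = (u, v) ∨ ends e = (v, u)) ∨
      (∃ e ∈ A, ends e = (v, u) ∨ ends e = (u, v)))) Iff.rfl

theorem Zcond_eq_sum_of_iff {V E : Type*} [Fintype E] (q : ℝ) (ends : E → V × V)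
    (w : E → ℝ) {P : Finset E → Prop} (S : Finset (Finset E)) (hS : ∀ A, P A ↔ A ∈ S) :
    Zcond q ends w P = ∑ A ∈ S, (∏ e ∈ A, w e) * q ^ kappa ends A := by
  simp only [Zcond, hS, sum_ite_mem, univ_inter]

theorem kappa_eq_card {V E : Type*} [Fintype V] [DecidableEq V] [Fintype E]
    (ends : E → V × V) (A : Finset E) :
    kappa ends A = Fintype.card (subGraph ends A).ConnectedComponent :=
  Nat.card_eq_fintype_card

def Y0_12 : Finset (Finset (Fin 6)) :=
  {{1, 2, 4}, {0, 1, 2, 4}, {1, 2, 3, 4}, {1, 2, 4, 5}, {1, 2, 3, 5}, {1, 2, 3, 4, 5}}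

set_option maxRecDepth 20000 in
theorem mem_Y0_12_iff (A : Finset (Fin 6)) :
    A ∈ Y0_12 ↔
      ¬ (subGraph Yends A).Reachable 0 1 ∧ (subGraph Yends A).Reachable 1 2 := by
  revert A; decide

set_option maxRecDepth 20000 in
theorem kappa_Yends_of_mem_Y0_12 :
    ∀ A ∈ Y0_12, kappa Yends A = if A = {1, 2, 4} then 3 else 2 := by
  simp only [kappa_eq_card]; decide

/-- The contribution `Z_{0|12}` to `Z(Y;q,w)` from edge-subsets in which vertex `0`
is in one component and `1,2` lie together in a distinct component equals
`q² a b² (a² + 3a + q + b)`. -/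
theorem Z0_12_eval (q a b : ℝ) :
    Zcond q Yends (Yw a b)
      (fun A => ¬ (subGraph Yends A).Reachable 0 1 ∧ (subGraph Yends A).Reachable 1 2)
      = q ^ 2 * a * b ^ 2 * (a ^ 2 + 3 * a + q + b) := by
  rw [Zcond_eq_sum_of_iff q Yends (Yw a b) Y0_12 fun A => (mem_Y0_12_iff A).symm,
    sum_congr rfl fun A hA => by rw [kappa_Yends_of_mem_Y0_12 A hA]]
  simp +decide [Y0_12, Yw]
  ring
end
end

section
/- For the triangle gadget Y, the contribution Z_{0|1|2} to Z(Y;q,w) from edge-subsets in which vertices 0, 1, 2 lie in three distinct components equals q^3·( b^3 + 3b^2(2a+q) + (3b+q)(a^3 + 3a^2 + 3aq + q^2) ). -/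
open scoped Classical

noncomputable section

/- The summand of `A` depends only on the numbers of pendant and triangle edges in
`A`, since the triangle is the only cycle of `Y`, so that `κ(A) = 6 - |A|`, plus one when the whole
triangle is chosen. Counting the subsets that keep `0, 1, 2` apart by these two numbers: with no
triangle edge every set of pendant edges is allowed, with one triangle edge the two pendant edges at
its ends may not both be chosen, and with two or three triangle edges at most one pendant edge
may be chosen. -/

-- Under `open scoped Classical` the default instance is `Classical.propDecidable`, which
-- `decide` cannot evaluate.
instance (A : Finset (Fin 6)) : DecidableRel (subGraph Yends A).Adj := fun _ _ =>
  inferInstanceAs (Decidable (_ ≠ _ ∧ _))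

open Finset

namespace Y

def pendantCount (A : Finset (Fin 6)) : ℕ := #{e ∈ A | e < 3}

def triangleCount (A : Finset (Fin 6)) : ℕ := #{e ∈ A | ¬e < 3}

abbrev Separated (A : Finset (Fin 6)) : Prop :=
  ¬ (subGraph Yends A).Reachable 0 1 ∧ ¬ (subGraph Yends A).Reachable 0 2 ∧
    ¬ (subGraph Yends A).Reachable 1 2

theorem card_eq_pendantCount_add_triangleCount (A : Finset (Fin 6)) :
    #A = pendantCount A + triangleCount A :=
  (card_filter_add_card_filter_not _).symm

theorem Yw_apply (a b : ℝ) (e : Fin 6) : Yw a b e = if e < 3 then b else a := by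
  fin_cases e <;> rfl

theorem prod_Yw (a b : ℝ) (A : Finset (Fin 6)) :
    ∏ e ∈ A, Yw a b e = b ^ pendantCount A * a ^ triangleCount A := by
  simp only [Yw_apply, prod_ite, prod_const, pendantCount, triangleCount]

theorem kappa_Yends (A : Finset (Fin 6)) :
    kappa Yends A = 6 - #A + if triangleCount A = 3 then 1 else 0 := by
  rw [kappa, Nat.card_eq_fintype_card]
  revert A
  decide +kernel

theorem map_counts_filter_separated :
    (univ.filter Separated).val.map (fun A => (pendantCount A, triangleCount A)) =
      {(0, 0)} + 3 • {(1, 0)} + 3 • {(2, 0)} + {(3, 0)} +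
      3 • {(0, 1)} + 9 • {(1, 1)} + 6 • {(2, 1)} +
      3 • {(0, 2)} + 9 • {(1, 2)} +
      {(0, 3)} + 3 • {(1, 3)} := by
  decide +kernel

end Y

/-- The contribution `Z_{0|1|2}` to `Z(Y;q,w)` from edge-subsets in which the
vertices `0,1,2` lie in three pairwise distinct components equals
`q³ (b³ + 3b²(2a+q) + (3b+q)(a³ + 3a² + 3aq + q²))`. -/
theorem Z0_1_2_eval (q a b : ℝ) :
    Zcond q Yends (Yw a b)
      (fun A => ¬ (subGraph Yends A).Reachable 0 1 ∧
        ¬ (subGraph Yends A).Reachable 0 2 ∧ ¬ (subGraph Yends A).Reachable 1 2)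
      = q ^ 3 * (b ^ 3 + 3 * b ^ 2 * (2 * a + q) +
          (3 * b + q) * (a ^ 3 + 3 * a ^ 2 + 3 * a * q + q ^ 2)) := by
  set monomial : ℕ × ℕ → ℝ := fun m =>
    b ^ m.1 * a ^ m.2 * q ^ (6 - (m.1 + m.2) + if m.2 = 3 then 1 else 0)
  have hsum : Zcond q Yends (Yw a b) Y.Separated =
      (((univ.filter Y.Separated).val.map
        (fun A => (Y.pendantCount A, Y.triangleCount A))).map monomial).sum := by
    rw [Multiset.map_map, sum_map_val, sum_filter, Zcond]
    refine sum_congr rfl fun A _ => ?_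
    simp only [Function.comp_apply, Y.prod_Yw, Y.kappa_Yends,
      Y.card_eq_pendantCount_add_triangleCount, monomial]
  change Zcond q Yends (Yw a b) Y.Separated = _
  rw [hsum, Y.map_counts_filter_separated]
  simp only [Multiset.map_add, Multiset.map_nsmul, Multiset.map_singleton,
    Multiset.sum_add, Multiset.sum_nsmul, Multiset.sum_singleton, monomial]
  norm_num
  ring
end
end
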